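/- Let L ≥ 1 and let d₀, d₁, …, d_L be positive integers with d_L = K. For p = 1,…,L let W⁽ᵖ⁾ ∈ ℝ^{d_p × d_{p−1}} be weight matrices, let x = x⁽¹⁾ ∈ ℝ^{d₀}, define pre-activations z⁽ᵖ⁾ = W⁽ᵖ⁾x⁽ᵖ⁾ and activations x⁽ᵖ⁺¹⁾ = D⁽ᵖ⁾z⁽ᵖ⁾, where D⁽ᵖ⁾ = diag(𝟙[z⁽ᵖ⁾ ≥ 0]) is the diagonal 0/1 matrix of the ReLU pattern. Set G⁽ᴸ⁾ = I_K and, for p < L, G⁽ᵖ⁾ = W⁽ᴸ⁾D⁽ᴸ⁻¹⁾W⁽ᴸ⁻¹⁾⋯W⁽ᵖ⁺¹⁾D⁽ᵖ⁾. Let F be the matrix with K rows whose transpose Fᵀ stacks vertically, for p = 1,…,L, the two blocks (G⁽ᵖ⁾)ᵀ ⊗ x⁽ᵖ⁾ and (G⁽ᵖ⁾)ᵀ. Let p ∈ ℝ^K be a probability vector (all entries nonnegative, summing to 1), A = diag(p) − ppᵀ, and H = FᵀAF. If ‖W⁽ᵖ⁾‖₂ ≤ M_W for all p with M_W > 1,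 and ‖x‖₂ ≤ M_x, then ‖H‖₂ ≤ L·√2·M_x²·M_W^{2L} + √2·M_W²(M_W^{2L} − 1)/(M_W² − 1). -/

import Mathlib

open Matrix BigOperators

/-- The spectral norm (ℓ² operator norm) of a real matrix. -/
noncomputable def matrixSpectralNorm {m n : Type*} [Fintype m] [Fintype n] [DecidableEq n]
    (A : Matrix m n ℝ) : ℝ :=
  ‖LinearMap.toContinuousLinearMap (Matrix.toEuclideanLin A)‖

/-- The Euclidean norm of a real vector. -/
noncomputable def eNorm {n : Type*} [Fintype n] (x : n → ℝ) : ℝ :=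
  Real.sqrt (∑ i, x i ^ 2)

/-!
Submultiplicativity gives `‖Fᵀ A F‖ ≤ ‖A‖ ‖F‖²`, and
`‖A‖ ≤ √2` because the Frobenius norm of `diag p - p pᵀ` is at most `√2`. Applied to `v`, the
`p`-th block of `Fᵀ` produces `(Gᵀ v ⊗ x, Gᵀ v)`, whose squared norm is
`(‖x⁽ᵖ⁾‖² + 1) ‖Gᵀ v‖²`; hence `‖F‖² ≤ ∑ₚ (‖x⁽ᵖ⁾‖² + 1) ‖G⁽ᵖ⁾‖²`. ReLU masks have norm at most
`1`, so `‖x⁽ᵖ⁾‖ ≤ M_W^(p-1) M_x` and `‖G⁽ᵖ⁾‖ ≤ M_W^(L-p) ≤ M_W^(L-p+1)` as `M_W > 1`.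
With the weaker bound each term is `M_x² M_W^(2L) + M_W^(2(L-p+1))`, and summing over `p` gives
exactly the stated bound, the second part being a geometric series.
-/

open scoped Matrix.Norms.L2Operator

section SpectralNorm

variable {l m n : Type*} [Fintype l] [Fintype m] [Fintype n]

lemma eNorm_nonneg (x : n → ℝ) : 0 ≤ eNorm x :=
  Real.sqrt_nonneg _

lemma eNorm_sq (x : n → ℝ) : eNorm x ^ 2 = ∑ i, x i ^ 2 :=
  Real.sq_sqrt (Finset.sum_nonneg fun _ _ => sq_nonneg _)

lemma eNorm_eq_norm_toLp (x : n → ℝ) : eNorm x = ‖WithLp.toLp 2 x‖ := by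
  simp [eNorm, EuclideanSpace.norm_eq, sq_abs]

variable [DecidableEq n]

lemma matrixSpectralNorm_eq_l2_opNorm (A : Matrix m n ℝ) : matrixSpectralNorm A = ‖A‖ := rfl

lemma matrixSpectralNorm_nonneg (A : Matrix m n ℝ) : 0 ≤ matrixSpectralNorm A :=
  norm_nonneg _

lemma matrixSpectralNorm_mul_le [DecidableEq l] (A : Matrix m n ℝ) (B : Matrix n l ℝ) :
    matrixSpectralNorm (A * B) ≤ matrixSpectralNorm A * matrixSpectralNorm B :=
  l2_opNorm_mul A B

lemma matrixSpectralNorm_transpose [DecidableEq m] (A : Matrix m n ℝ) :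
    matrixSpectralNorm Aᵀ = matrixSpectralNorm A :=
  l2_opNorm_conjTranspose A

lemma matrixSpectralNorm_diagonal_le_one {v : n → ℝ} (hv : ∀ i, |v i| ≤ 1) :
    matrixSpectralNorm (diagonal v) ≤ 1 := by
  rw [matrixSpectralNorm_eq_l2_opNorm, l2_opNorm_diagonal]
  exact (pi_norm_le_iff_of_nonneg zero_le_one).2 hv

lemma eNorm_mulVec_le (A : Matrix m n ℝ) (v : n → ℝ) :
    eNorm (A *ᵥ v) ≤ matrixSpectralNorm A * eNorm v := by
  simpa [eNorm_eq_norm_toLp, matrixSpectralNorm_eq_l2_opNorm] using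
    l2_opNorm_mulVec A (WithLp.toLp 2 v)

lemma matrixSpectralNorm_sq_le_of_eNorm_sq_le (A : Matrix m n ℝ) {c : ℝ} (hc : 0 ≤ c)
    (h : ∀ v, eNorm (A *ᵥ v) ^ 2 ≤ c * eNorm v ^ 2) : matrixSpectralNorm A ^ 2 ≤ c := by
  rw [← Real.le_sqrt (matrixSpectralNorm_nonneg A) hc]
  refine ContinuousLinearMap.opNorm_le_bound _ (Real.sqrt_nonneg c) fun v => ?_
  have hv := h v.ofLp
  rw [eNorm_eq_norm_toLp, eNorm_eq_norm_toLp, WithLp.toLp_ofLp] at hv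
  rw [← Real.sqrt_sq (norm_nonneg _), ← Real.sqrt_sq (norm_nonneg v), ← Real.sqrt_mul hc]
  exact Real.sqrt_le_sqrt (by simpa [Matrix.toLpLin_apply] using hv)

lemma matrixSpectralNorm_sq_le_sum_sq (A : Matrix m n ℝ) :
    matrixSpectralNorm A ^ 2 ≤ ∑ i, ∑ j, A i j ^ 2 := by
  refine matrixSpectralNorm_sq_le_of_eNorm_sq_le A (by positivity) fun v => ?_
  rw [eNorm_sq, eNorm_sq, Finset.sum_mul]
  exact Finset.sum_le_sum fun i _ => Finset.sum_mul_sq_le_sq_mul_sq _ _ _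

lemma matrixSpectralNorm_mul_mul_transpose_le [DecidableEq m] (F : Matrix m n ℝ)
    (A : Matrix n n ℝ) :
    matrixSpectralNorm (F * A * Fᵀ) ≤ matrixSpectralNorm A * matrixSpectralNorm F ^ 2 := by
  calc matrixSpectralNorm (F * A * Fᵀ)
      ≤ matrixSpectralNorm F * matrixSpectralNorm A * matrixSpectralNorm Fᵀ := by
        grw [matrixSpectralNorm_mul_le, matrixSpectralNorm_mul_le]
        exact matrixSpectralNorm_nonneg _
    _ = matrixSpectralNorm A * matrixSpectralNorm F ^ 2 := by
        rw [matrixSpectralNorm_transpose]; ring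

end SpectralNorm

lemma sum_sq_diagonal_sub_vecMulVec_le_two {K : Type*} [Fintype K] [DecidableEq K] {p : K → ℝ}
    (hp : ∀ j, 0 ≤ p j) (hp1 : ∑ j, p j = 1) :
    ∑ i, ∑ j, (diagonal p - vecMulVec p p) i j ^ 2 ≤ 2 := by
  have hp_le_one (i : K) : p i ≤ 1 :=
    hp1 ▸ Finset.single_le_sum (fun j _ => hp j) (Finset.mem_univ i)
  have hsq : ∑ i, p i ^ 2 ≤ 1 :=
    hp1 ▸ Finset.sum_le_sum fun i _ => by nlinarith [hp i, hp_le_one i]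
  -- row `i` is `p i • (eᵢ - p)`, and `‖eᵢ - p‖² = 1 - 2 p i + ‖p‖² ≤ 2`
  have hrow (i : K) : ∑ j, (diagonal p - vecMulVec p p) i j ^ 2
      = p i ^ 2 * (1 - 2 * p i + ∑ j, p j ^ 2) := by
    have hentry (j : K) : (diagonal p - vecMulVec p p) i j ^ 2
        = p i ^ 2 * ((if i = j then 1 - 2 * p j else 0) + p j ^ 2) := by
      by_cases h : i = j
      · subst h; simp [vecMulVec_apply]; ring
      · simp [vecMulVec_apply, h]; ring
    simp only [hentry, ← Finset.mul_sum, Finset.sum_add_distrib, Finset.sum_ite_eq,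
      Finset.mem_univ, if_true]
  calc ∑ i, ∑ j, (diagonal p - vecMulVec p p) i j ^ 2
      ≤ ∑ i, p i ^ 2 * 2 := by
        simp only [hrow]
        exact Finset.sum_le_sum fun i _ => by gcongr; linarith [hp i]
    _ ≤ 2 := by rw [← Finset.sum_mul]; nlinarith

lemma matrixSpectralNorm_diagonal_sub_vecMulVec_le {K : Type*} [Fintype K] [DecidableEq K]
    {p : K → ℝ} (hp : ∀ j, 0 ≤ p j) (hp1 : ∑ j, p j = 1) :
    matrixSpectralNorm (diagonal p - vecMulVec p p) ≤ √2 :=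
  (Real.le_sqrt (matrixSpectralNorm_nonneg _) zero_le_two).2 <|
    (matrixSpectralNorm_sq_le_sum_sq _).trans (sum_sq_diagonal_sub_vecMulVec_le_two hp hp1)

section Stack

variable {ι n : Type*} [Fintype ι] [Fintype n] {m k : ι → Type*} [∀ ℓ, Fintype (m ℓ)]
  [∀ ℓ, Fintype (k ℓ)] {B : ∀ ℓ, Matrix (m ℓ) n ℝ} {x : ∀ ℓ, k ℓ → ℝ}
  {F : Matrix ((ℓ : ι) × ((m ℓ × k ℓ) ⊕ m ℓ)) n ℝ}

lemma eNorm_sq_mulVec_of_stack (hF₁ : ∀ ℓ i a j, F ⟨ℓ, .inl (i, a)⟩ j = B ℓ i j * x ℓ a)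
    (hF₂ : ∀ ℓ i j, F ⟨ℓ, .inr i⟩ j = B ℓ i j) (v : n → ℝ) :
    eNorm (F *ᵥ v) ^ 2 = ∑ ℓ, (eNorm (x ℓ) ^ 2 + 1) * eNorm (B ℓ *ᵥ v) ^ 2 := by
  have h₁ (ℓ i a) : (F *ᵥ v) ⟨ℓ, .inl (i, a)⟩ = (B ℓ *ᵥ v) i * x ℓ a := by
    simp only [mulVec, dotProduct, hF₁, Finset.sum_mul]
    exact Finset.sum_congr rfl fun j _ => by ring
  have h₂ (ℓ i) : (F *ᵥ v) ⟨ℓ, .inr i⟩ = (B ℓ *ᵥ v) i := by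
    simp only [mulVec, dotProduct, hF₂]
  simp only [eNorm_sq, Fintype.sum_sigma, Fintype.sum_sum_type, Fintype.sum_prod_type, h₁, h₂,
    mul_pow, ← Finset.sum_mul, ← Finset.mul_sum, add_mul, one_mul]
  exact Finset.sum_congr rfl fun ℓ _ => by ring

lemma matrixSpectralNorm_sq_le_of_stack [DecidableEq n]
    (hF₁ : ∀ ℓ i a j, F ⟨ℓ, .inl (i, a)⟩ j = B ℓ i j * x ℓ a)
    (hF₂ : ∀ ℓ i j, F ⟨ℓ, .inr i⟩ j = B ℓ i j) :
    matrixSpectralNorm F ^ 2 ≤ ∑ ℓ, (eNorm (x ℓ) ^ 2 + 1) * matrixSpectralNorm (B ℓ) ^ 2 := by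
  refine matrixSpectralNorm_sq_le_of_eNorm_sq_le F (by positivity) fun v => ?_
  rw [eNorm_sq_mulVec_of_stack hF₁ hF₂, Finset.sum_mul]
  refine Finset.sum_le_sum fun ℓ _ => ?_
  rw [mul_assoc, ← mul_pow]
  gcongr
  · exact eNorm_nonneg _
  · exact eNorm_mulVec_le (B ℓ) v

end Stack

lemma matrixSpectralNorm_reluPattern_le {n : Type*} [Fintype n] [DecidableEq n] (z : n → ℝ) :
    matrixSpectralNorm (diagonal fun i => if 0 ≤ z i then (1 : ℝ) else 0) ≤ 1 :=
  matrixSpectralNorm_diagonal_le_one fun i => by split_ifs <;> simp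

section Network

variable {L : ℕ} {d : ℕ → ℕ} {W : ∀ q, Matrix (Fin (d (q + 1))) (Fin (d q)) ℝ}
  {Dm : ∀ q, Matrix (Fin (d (q + 1))) (Fin (d (q + 1))) ℝ} {MW : ℝ}

lemma eNorm_activation_le {xv : ∀ q, Fin (d q) → ℝ} {Mx : ℝ} (hMW : 0 ≤ MW)
    (hxrec : ∀ q < L, xv (q + 1) = Dm q *ᵥ (W q *ᵥ xv q))
    (hD : ∀ q < L, matrixSpectralNorm (Dm q) ≤ 1) (hW : ∀ q < L, matrixSpectralNorm (W q) ≤ MW)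
    (hx : eNorm (xv 0) ≤ Mx) : ∀ q ≤ L, eNorm (xv q) ≤ MW ^ q * Mx := by
  intro q hq
  induction q with
  | zero => simpa using hx
  | succ q ih =>
    have hqL : q < L := by omega
    calc eNorm (xv (q + 1))
        ≤ matrixSpectralNorm (Dm q) * (matrixSpectralNorm (W q) * eNorm (xv q)) := by
          rw [hxrec q hqL]
          grw [eNorm_mulVec_le, eNorm_mulVec_le]
          exact matrixSpectralNorm_nonneg _
      _ ≤ matrixSpectralNorm (W q) * eNorm (xv q) :=
          mul_le_of_le_one_left (mul_nonneg (matrixSpectralNorm_nonneg _) (eNorm_nonneg _))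
            (hD q hqL)
      _ ≤ MW * (MW ^ q * Mx) := mul_le_mul (hW q hqL) (ih hqL.le) (eNorm_nonneg _) hMW
      _ = MW ^ (q + 1) * Mx := by ring

lemma matrixSpectralNorm_backprop_le {G : ∀ q, Matrix (Fin (d L)) (Fin (d q)) ℝ} (hMW : 1 ≤ MW)
    (hGL : G L = 1) (hG : ∀ q, q + 1 < L → G (q + 1) = G (q + 2) * W (q + 1) * Dm q)
    (hD : ∀ q < L, matrixSpectralNorm (Dm q) ≤ 1) (hW : ∀ q < L, matrixSpectralNorm (W q) ≤ MW) :
    ∀ q < L, matrixSpectralNorm (G (q + 1)) ≤ MW ^ (L - q) := by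
  intro q hq
  obtain ⟨k, hk⟩ : ∃ k, L - q = k + 1 := ⟨L - q - 1, by omega⟩
  rw [hk]
  induction k generalizing q with
  | zero =>
    obtain rfl : L = q + 1 := by omega
    rw [hGL, ← diagonal_one]
    exact (matrixSpectralNorm_diagonal_le_one fun _ => by simp).trans (by simpa using hMW)
  | succ k ih =>
    rw [hG q (by omega)]
    calc matrixSpectralNorm (G (q + 2) * W (q + 1) * Dm q)
        ≤ matrixSpectralNorm (G (q + 2)) * matrixSpectralNorm (W (q + 1))
            * matrixSpectralNorm (Dm q) := by
          grw [matrixSpectralNorm_mul_le, matrixSpectralNorm_mul_le]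
          exact matrixSpectralNorm_nonneg _
      _ ≤ matrixSpectralNorm (G (q + 2)) * matrixSpectralNorm (W (q + 1)) :=
          mul_le_of_le_one_right (mul_nonneg (matrixSpectralNorm_nonneg _)
            (matrixSpectralNorm_nonneg _)) (hD q (by omega))
      _ ≤ MW ^ (k + 1) * MW :=
          mul_le_mul (ih (q + 1) (by omega) (by omega)) (hW (q + 1) (by omega))
            (matrixSpectralNorm_nonneg _) (by positivity)
      _ = MW ^ (k + 1 + 1) := by ring

end Network

lemma sum_fin_pow_sub_eq {r : ℝ} (hr : r ≠ 1) (L : ℕ) :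
    ∑ ℓ : Fin L, r ^ (L - ℓ) = r * (r ^ L - 1) / (r - 1) := by
  rw [Fin.sum_univ_eq_sum_range (fun i => r ^ (L - i)) L, mul_div_assoc, ← geom_sum_eq hr,
    Finset.mul_sum, ← Finset.sum_range_reflect (fun j => r * r ^ j) L]
  refine Finset.sum_congr rfl fun i hi => ?_
  rw [← pow_succ']
  congr 1
  have := Finset.mem_range.1 hi
  omega

/-- Indexing convention: for `q < L`, `W q`, `xv q`, `zv q`, `Dm q` are the paper's
`W⁽q⁺¹⁾`, `x⁽q⁺¹⁾`, `z⁽q⁺¹⁾`, `D⁽q⁺¹⁾`, while `G q` is the paper's `G⁽q⁾`. `Ft` is the paper's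
`Fᵀ`, with rows indexed by a layer `ℓ` (the paper's `p = ℓ + 1`) and an index into either
`(G⁽ᵖ⁾)ᵀ ⊗ x⁽ᵖ⁾` or `(G⁽ᵖ⁾)ᵀ`. -/
theorem spectral_norm_bound_of_G_term_hessian_general
    (L : ℕ)
    (d : ℕ → ℕ)
    (W : (q : ℕ) → Matrix (Fin (d (q + 1))) (Fin (d q)) ℝ)
    (xv : (q : ℕ) → Fin (d q) → ℝ)
    (zv : (q : ℕ) → Fin (d (q + 1)) → ℝ)
    (hz : ∀ q < L, zv q = (W q).mulVec (xv q))
    (Dm : (q : ℕ) → Matrix (Fin (d (q + 1))) (Fin (d (q + 1))) ℝ)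
    (hD : ∀ q < L, Dm q = Matrix.diagonal fun i => if 0 ≤ zv q i then (1 : ℝ) else 0)
    (hxrec : ∀ q < L, xv (q + 1) = (Dm q).mulVec (zv q))
    (G : (q : ℕ) → Matrix (Fin (d L)) (Fin (d q)) ℝ)
    (hGL : G L = 1)
    (hG : ∀ q, q + 1 < L → G (q + 1) = G (q + 2) * W (q + 1) * Dm q)
    (Ft : Matrix ((ℓ : Fin L) × ((Fin (d (ℓ.1 + 1)) × Fin (d ℓ.1)) ⊕ Fin (d (ℓ.1 + 1))))
      (Fin (d L)) ℝ)
    (hFt1 : ∀ (ℓ : Fin L) (i : Fin (d (ℓ.1 + 1))) (a : Fin (d ℓ.1)) (j : Fin (d L)),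
      Ft ⟨ℓ, Sum.inl (i, a)⟩ j = (G (ℓ.1 + 1))ᵀ i j * xv ℓ.1 a)
    (hFt2 : ∀ (ℓ : Fin L) (i : Fin (d (ℓ.1 + 1))) (j : Fin (d L)),
      Ft ⟨ℓ, Sum.inr i⟩ j = (G (ℓ.1 + 1))ᵀ i j)
    (pv : Fin (d L) → ℝ) (hpv : ∀ j, 0 ≤ pv j) (hpsum : ∑ j, pv j = 1)
    (MW Mx : ℝ) (hMW : 1 < MW)
    (hW : ∀ q < L, matrixSpectralNorm (W q) ≤ MW)
    (hx : eNorm (xv 0) ≤ Mx) :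
    matrixSpectralNorm (Ft * (Matrix.diagonal pv - Matrix.vecMulVec pv pv) * Ftᵀ) ≤
      (L : ℝ) * Real.sqrt 2 * Mx ^ 2 * MW ^ (2 * L)
        + Real.sqrt 2 * (MW ^ 2 * (MW ^ (2 * L) - 1) / (MW ^ 2 - 1)) := by
  have hDm (q : ℕ) (hq : q < L) : matrixSpectralNorm (Dm q) ≤ 1 :=
    hD q hq ▸ matrixSpectralNorm_reluPattern_le (zv q)
  have hxq := eNorm_activation_le (by linarith) (fun q hq => by rw [hxrec q hq, hz q hq]) hDm hW hx
  have hGq := matrixSpectralNorm_backprop_le hMW.le hGL hG hDm hW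
  have hlayer (ℓ : Fin L) : (eNorm (xv ℓ) ^ 2 + 1) * matrixSpectralNorm (G (ℓ + 1))ᵀ ^ 2
      ≤ Mx ^ 2 * MW ^ (2 * L) + (MW ^ 2) ^ (L - ℓ) := by
    rw [matrixSpectralNorm_transpose]
    calc (eNorm (xv ℓ) ^ 2 + 1) * matrixSpectralNorm (G (ℓ + 1)) ^ 2
        ≤ ((MW ^ (ℓ : ℕ) * Mx) ^ 2 + 1) * (MW ^ (L - ℓ)) ^ 2 := by
          gcongr
          exacts [eNorm_nonneg _, hxq ℓ ℓ.2.le, matrixSpectralNorm_nonneg _, hGq ℓ ℓ.2]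
      _ = Mx ^ 2 * (MW ^ (ℓ + (L - ℓ) : ℕ)) ^ 2 + (MW ^ 2) ^ (L - ℓ) := by ring
      _ = Mx ^ 2 * MW ^ (2 * L) + (MW ^ 2) ^ (L - ℓ) := by
          rw [Nat.add_sub_cancel' ℓ.2.le, ← pow_mul']
  calc matrixSpectralNorm (Ft * (diagonal pv - vecMulVec pv pv) * Ftᵀ)
      ≤ matrixSpectralNorm (diagonal pv - vecMulVec pv pv) * matrixSpectralNorm Ft ^ 2 :=
        matrixSpectralNorm_mul_mul_transpose_le _ _
    _ ≤ √2 * ∑ ℓ : Fin L, (eNorm (xv ℓ) ^ 2 + 1) * matrixSpectralNorm (G (ℓ + 1))ᵀ ^ 2 := by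
        gcongr
        exacts [matrixSpectralNorm_diagonal_sub_vecMulVec_le hpv hpsum,
          matrixSpectralNorm_sq_le_of_stack hFt1 hFt2]
    _ ≤ √2 * ∑ ℓ : Fin L, (Mx ^ 2 * MW ^ (2 * L) + (MW ^ 2) ^ (L - ℓ)) := by
        gcongr with ℓ
        exact hlayer ℓ
    _ = (L : ℝ) * √2 * Mx ^ 2 * MW ^ (2 * L)
          + √2 * (MW ^ 2 * (MW ^ (2 * L) - 1) / (MW ^ 2 - 1)) := by
        rw [Finset.sum_add_distrib, sum_fin_pow_sub_eq (by nlinarith), ← pow_mul]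
        simp only [Finset.sum_const, Finset.card_univ, Fintype.card_fin, nsmul_eq_mul]
        ring

/-- **Theorem 1.**  Spectral-norm bound for the G-term Hessian approximation
`H = Fᵀ A F` of the cross-entropy loss of an `L`-layer fully connected ReLU
network without bias terms.

Indexing convention (avoiding subtraction): for `q = 0, …, L-1`,
`W q` is the paper's `W⁽q⁺¹⁾ ∈ ℝ^{d_{q+1} × d_q}`, `xv q` is the paper's
`x⁽q⁺¹⁾` (so `xv 0 = x` is the input), `zv q` is the paper's `z⁽q⁺¹⁾`, and
`Dm q` is the paper's `D⁽q⁺¹⁾`.  For `q = 1, …, L`, `G q` is the paper's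
`G⁽q⁾`; `G L = I` and `G q = G (q+1) * W⁽q⁺¹⁾ * D⁽q⁾` for `q < L`.
`Ft` is the paper's `Fᵀ`: its rows are indexed by a block `ℓ : Fin L`
(the paper's layer `p = ℓ+1`) together with either an index into
`(G⁽ᵖ⁾)ᵀ ⊗ x⁽ᵖ⁾` (a pair, since `x⁽ᵖ⁾` is a one-column matrix) or an index
into `(G⁽ᵖ⁾)ᵀ`.  The number of classes is `K = d L`. -/
theorem spectral_norm_bound_of_G_term_hessian
    (L : ℕ) (hL : 1 ≤ L)
    (d : ℕ → ℕ) (hd : ∀ q ≤ L, 0 < d q)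
    (W : (q : ℕ) → Matrix (Fin (d (q + 1))) (Fin (d q)) ℝ)
    (xv : (q : ℕ) → Fin (d q) → ℝ)
    (zv : (q : ℕ) → Fin (d (q + 1)) → ℝ)
    (hz : ∀ q < L, zv q = (W q).mulVec (xv q))
    (Dm : (q : ℕ) → Matrix (Fin (d (q + 1))) (Fin (d (q + 1))) ℝ)
    (hD : ∀ q < L, Dm q = Matrix.diagonal fun i => if 0 ≤ zv q i then (1 : ℝ) else 0)
    (hxrec : ∀ q < L, xv (q + 1) = (Dm q).mulVec (zv q))
    (G : (q : ℕ) → Matrix (Fin (d L)) (Fin (d q)) ℝ)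
    (hGL : G L = 1)
    (hG : ∀ q, q + 1 < L → G (q + 1) = G (q + 2) * W (q + 1) * Dm q)
    (Ft : Matrix ((ℓ : Fin L) × ((Fin (d (ℓ.1 + 1)) × Fin (d ℓ.1)) ⊕ Fin (d (ℓ.1 + 1))))
      (Fin (d L)) ℝ)
    (hFt1 : ∀ (ℓ : Fin L) (i : Fin (d (ℓ.1 + 1))) (a : Fin (d ℓ.1)) (j : Fin (d L)),
      Ft ⟨ℓ, Sum.inl (i, a)⟩ j = (G (ℓ.1 + 1))ᵀ i j * xv ℓ.1 a)
    (hFt2 : ∀ (ℓ : Fin L) (i : Fin (d (ℓ.1 + 1))) (j : Fin (d L)),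
      Ft ⟨ℓ, Sum.inr i⟩ j = (G (ℓ.1 + 1))ᵀ i j)
    (pv : Fin (d L) → ℝ) (hpv : ∀ j, 0 ≤ pv j) (hpsum : ∑ j, pv j = 1)
    (MW Mx : ℝ) (hMW : 1 < MW)
    (hW : ∀ q < L, matrixSpectralNorm (W q) ≤ MW)
    (hx : eNorm (xv 0) ≤ Mx) :
    matrixSpectralNorm (Ft * (Matrix.diagonal pv - Matrix.vecMulVec pv pv) * Ftᵀ) ≤
      (L : ℝ) * Real.sqrt 2 * Mx ^ 2 * MW ^ (2 * L)
        + Real.sqrt 2 * (MW ^ 2 * (MW ^ (2 * L) - 1) / (MW ^ 2 - 1)) :=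
  spectral_norm_bound_of_G_term_hessian_general L d W xv zv hz Dm hD hxrec G hGL hG Ft hFt1 hFt2 pv
    hpv hpsum MW Mx hMW hW hx
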